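/- For every nonnegative integer n, ∑_{m=0}^{n} (-1)^{m+n} * C(n+m+1, 2m+1) * 4^m = n + 1. -/

import Mathlib

/-!
The sum is `(-1)ⁿ Bₙ(-4)` for the Morgan-Voyce polynomials `Bₙ(x) = ∑ₘ C(n+m+1, 2m+1) xᵐ`,
`bₙ(x) = ∑ₘ C(n+m, 2m) xᵐ`. Pascal's rule gives the coupled recurrences `bₙ₊₁ = x Bₙ + bₙ` and
`Bₙ₊₁ = bₙ₊₁ + Bₙ`, and at `x = -4` these are solved by `Bₙ = (-1)ⁿ (n+1)`, `bₙ = (-1)ⁿ (2n+1)`.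
-/

open Finset

namespace MorganVoyce

variable {R : Type*} [CommRing R]

def B (x : R) (n : ℕ) : R :=
  ∑ m ∈ range (n + 1), ((n + m + 1).choose (2 * m + 1) : R) * x ^ m

def b (x : R) (n : ℕ) : R :=
  ∑ m ∈ range (n + 1), ((n + m).choose (2 * m) : R) * x ^ m

theorem B_eq_sum_range_succ_succ (x : R) (n : ℕ) :
    B x n = ∑ m ∈ range (n + 2), ((n + m + 1).choose (2 * m + 1) : R) * x ^ m := by
  rw [B, sum_range_succ _ (n + 1), Nat.choose_eq_zero_of_lt (by omega), Nat.cast_zero,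
    zero_mul, add_zero]

theorem b_eq_sum_range_succ_succ (x : R) (n : ℕ) :
    b x n = ∑ m ∈ range (n + 2), ((n + m).choose (2 * m) : R) * x ^ m := by
  rw [b, sum_range_succ _ (n + 1), Nat.choose_eq_zero_of_lt (by omega), Nat.cast_zero,
    zero_mul, add_zero]

theorem b_succ (x : R) (n : ℕ) : b x (n + 1) = x * B x n + b x n := by
  rw [b_eq_sum_range_succ_succ x n, b, B, sum_range_succ' _ (n + 1),
    sum_range_succ' _ (n + 1), mul_sum, add_left_comm, ← add_assoc, ← sum_add_distrib]
  congr 1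
  · refine sum_congr rfl fun m _ => ?_
    rw [show n + (m + 1) = n + m + 1 by omega, show n + 1 + (m + 1) = n + m + 1 + 1 by omega,
      show 2 * (m + 1) = 2 * m + 1 + 1 by omega, Nat.choose_succ_succ', Nat.cast_add]
    ring
  · simp

theorem B_succ (x : R) (n : ℕ) : B x (n + 1) = b x (n + 1) + B x n := by
  rw [B_eq_sum_range_succ_succ x n, B, b, ← sum_add_distrib]
  refine sum_congr rfl fun m _ => ?_
  rw [show n + 1 + m + 1 = n + m + 1 + 1 by omega, Nat.choose_succ_succ', Nat.cast_add,
    show n + m + 1 = n + 1 + m by omega]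
  ring

theorem B_neg_four_and_b_neg_four (n : ℕ) :
    B (-4 : ℤ) n = (-1) ^ n * (n + 1) ∧ b (-4 : ℤ) n = (-1) ^ n * (2 * n + 1) := by
  induction n with
  | zero => simp [B, b]
  | succ n ih =>
    have hb : b (-4 : ℤ) (n + 1) = (-1) ^ (n + 1) * (2 * (n + 1 : ℕ) + 1) := by
      rw [b_succ, ih.1, ih.2]; push_cast; ring
    refine ⟨?_, hb⟩
    rw [B_succ, hb, ih.1]; push_cast; ring

end MorganVoyce

theorem thm1_restated (n : ℕ) :
    ∑ m ∈ Finset.range (n + 1),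
      (-1 : ℤ) ^ (m + n) * ((n + m + 1).choose (2 * m + 1)) * 4 ^ m = n + 1 := by
  have hSigns : ∀ m, (-1 : ℤ) ^ (m + n) * ((n + m + 1).choose (2 * m + 1)) * 4 ^ m
      = (-1) ^ n * (((n + m + 1).choose (2 * m + 1) : ℤ) * (-4) ^ m) := fun m => by
    rw [pow_add, show (-4 : ℤ) = -1 * 4 by norm_num, mul_pow]; ring
  simp_rw [hSigns, ← mul_sum]
  rw [← MorganVoyce.B, (MorganVoyce.B_neg_four_and_b_neg_four n).1, ← mul_assoc, ← pow_add,
    Even.neg_one_pow ⟨n, rfl⟩, one_mul]
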